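/- In the graph G constructed for the Steiner-tree reduction (vertices p_i, q_i, o_i; o_i joined only to p_i and q_i with weight-0 edges; Euclidean weights between endpoints of distinct segments), any Steiner tree T' spanning all terminals o_1,...,o_n that contains exactly one of {p_i, q_i} for each i yields, after deleting the terminals o_i and their incident edges, a spanning tree on a point set containing exactly one endpoint per segment with the same cost: cost after deletion = cost(T'). -/

import Mathlib

/-!
A terminal `o i` is adjacent in `H` only to the endpoints of segment `i` that lie in `H`, of
which there is exactly one, so it is a leaf of `H` and cannot be an interior vertex of a path.
Hence a path of `H` between two endpoints avoids the terminals and survives their deletion.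
Acyclicity passes to subgraphs, and the cost is unchanged because every deleted edge has
weight `0`.
-/

open scoped Classical

/-- Vertices of the auxiliary graph: `Sum.inl (i, b)` is an endpoint of segment `i`
(`b = false` for `p i`, `b = true` for `q i`), and `Sum.inr i` is the terminal `o i`. -/
abbrev SV (n : ℕ) := (Fin n × Bool) ⊕ Fin n

/-- The position of an endpoint vertex (terminals get a junk position). -/
noncomputable def vpos {n : ℕ} (p q : Fin n → EuclideanSpace ℝ (Fin 2)) :
    SV n → EuclideanSpace ℝ (Fin 2)
  | Sum.inl (i, b) => if b then q i else p i
  | Sum.inr _ => 0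

/-- The auxiliary graph: endpoints of distinct segments are pairwise adjacent
(the edges `(p i, q i)` are absent), and the terminal `o i` is adjacent exactly to
the two endpoints of segment `i`. -/
def steinerGraph (n : ℕ) : SimpleGraph (SV n) :=
  SimpleGraph.fromRel (fun u v =>
    match u, v with
    | Sum.inl (i, _), Sum.inl (j, _) => i ≠ j
    | Sum.inl (i, _), Sum.inr j => i = j
    | Sum.inr i, Sum.inl (j, _) => i = j
    | Sum.inr _, Sum.inr _ => False)

/-- Edge weights: Euclidean distance between endpoints of distinct segments;
weight `0` on the edges incident to terminals. -/
noncomputable def wfun {n : ℕ} (p q : Fin n → EuclideanSpace ℝ (Fin 2)) :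
    SV n → SV n → ℝ
  | Sum.inl x, Sum.inl y => dist (vpos p q (Sum.inl x)) (vpos p q (Sum.inl y))
  | _, _ => 0

/-- Cost of a subgraph: half the sum over ordered pairs of adjacent vertices. -/
noncomputable def subCost {n : ℕ} (p q : Fin n → EuclideanSpace ℝ (Fin 2))
    (H : (steinerGraph n).Subgraph) : ℝ :=
  (1 / 2) * ∑ u : SV n, ∑ v : SV n, if H.Adj u v then wfun p q u v else 0

/-- A Steiner tree: a connected acyclic subgraph containing all terminals. -/
def IsSteinerTree {n : ℕ} (H : (steinerGraph n).Subgraph) : Prop :=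
  H.Connected ∧ (∀ i : Fin n, Sum.inr i ∈ H.verts) ∧ H.coe.IsAcyclic

namespace SimpleGraph

variable {V : Type*} {G : SimpleGraph V}

theorem Walk.IsPath.exists_two_adj_toSubgraph_of_mem_support {u v x : V} {p : G.Walk u v}
    (hp : p.IsPath) (hx : x ∈ p.support) (hxu : x ≠ u) (hxv : x ≠ v) :
    ∃ a b, a ≠ b ∧ p.toSubgraph.Adj x a ∧ p.toSubgraph.Adj x b := by
  obtain ⟨i, rfl, hi⟩ := Walk.mem_support_iff_exists_getVert.mp hx
  have hi0 : i ≠ 0 := by rintro rfl; simp at hxu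
  have hil : i < p.length := hi.lt_of_ne (by rintro rfl; simp at hxv)
  obtain ⟨a, b, hab, hnbr⟩ :=
    Set.ncard_eq_two.mp (hp.ncard_neighborSet_toSubgraph_internal_eq_two hi0 hil)
  refine ⟨a, b, hab, ?_, ?_⟩ <;> simp [← Subgraph.mem_neighborSet, hnbr]

theorem Walk.IsPath.toSubgraph_le_deleteVerts {H : G.Subgraph} {S : Set V}
    (hS : ∀ s ∈ S, (H.neighborSet s).Subsingleton) {u v : V} {p : G.Walk u v}
    (hp : p.IsPath) (hpH : p.toSubgraph ≤ H) (hu : u ∉ S) (hv : v ∉ S) :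
    p.toSubgraph ≤ H.deleteVerts S := by
  have hnotS : ∀ x ∈ p.support, x ∉ S := by
    intro x hx hxS
    by_cases hxu : x = u
    · exact hu (hxu ▸ hxS)
    by_cases hxv : x = v
    · exact hv (hxv ▸ hxS)
    obtain ⟨a, b, hab, ha, hb⟩ := hp.exists_two_adj_toSubgraph_of_mem_support hx hxu hxv
    exact hab (hS x hxS (hpH.2 ha) (hpH.2 hb))
  refine ⟨fun x hx => ⟨hpH.1 hx, hnotS x (p.mem_verts_toSubgraph.mp hx)⟩, fun x y hxy => ?_⟩
  exact Subgraph.deleteVerts_adj.mpr ⟨hpH.1 (p.toSubgraph.edge_vert hxy),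
    hnotS x (Walk.mem_support_of_adj_toSubgraph hxy), hpH.1 (p.toSubgraph.edge_vert hxy.symm),
    hnotS y (Walk.mem_support_of_adj_toSubgraph hxy.symm), hpH.2 hxy⟩

theorem Subgraph.Preconnected.deleteVerts {H : G.Subgraph} (hH : H.Preconnected) {S : Set V}
    (hS : ∀ s ∈ S, (H.neighborSet s).Subsingleton) : (H.deleteVerts S).Preconnected := by
  rw [Subgraph.preconnected_iff_forall_exists_walk_subgraph] at hH ⊢
  rintro u v ⟨huH, huS⟩ ⟨hvH, hvS⟩
  obtain ⟨p, hpH⟩ := hH huH hvH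
  exact ⟨p.bypass, p.bypass_isPath.toSubgraph_le_deleteVerts hS
    (Walk.toSubgraph_bypass_le_toSubgraph.trans hpH) huS hvS⟩

end SimpleGraph

open SimpleGraph

variable {n : ℕ}

theorem steinerGraph_adj_inr {i : Fin n} {w : SV n} (h : (steinerGraph n).Adj (Sum.inr i) w) :
    ∃ b, w = Sum.inl (i, b) := by
  rcases w with ⟨j, b⟩ | j
  · obtain ⟨-, rfl | rfl⟩ := h <;> exact ⟨b, rfl⟩
  · simp [steinerGraph] at h

theorem neighborSet_inr_subsingleton {H : (steinerGraph n).Subgraph}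
    (hone : ∀ i : Fin n, Xor (Sum.inl (i, false) ∈ H.verts) (Sum.inl (i, true) ∈ H.verts))
    (i : Fin n) : (H.neighborSet (Sum.inr i)).Subsingleton := by
  intro w hw w' hw'
  obtain ⟨b, rfl⟩ := steinerGraph_adj_inr (H.adj_sub hw)
  obtain ⟨b', rfl⟩ := steinerGraph_adj_inr (H.adj_sub hw')
  have hb : Sum.inl (i, b) ∈ H.verts := H.edge_vert (H.adj_symm hw)
  have hb' : Sum.inl (i, b') ∈ H.verts := H.edge_vert (H.adj_symm hw')
  have hnot_both := ((xor_iff_or_and_not_and _ _).mp (hone i)).2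
  cases b <;> cases b' <;> tauto

theorem verts_deleteVerts_range_inr_nonempty {H : (steinerGraph n).Subgraph}
    (hne : H.verts.Nonempty)
    (hone : ∀ i : Fin n, Xor (Sum.inl (i, false) ∈ H.verts) (Sum.inl (i, true) ∈ H.verts)) :
    (H.deleteVerts (Set.range Sum.inr)).verts.Nonempty := by
  obtain ⟨v, hv⟩ := hne
  rcases v with x | i
  · exact ⟨_, hv, by simp⟩
  · rcases (hone i).or with h | h <;> exact ⟨_, h, by simp⟩

theorem subCost_deleteVerts_range_inr (p q : Fin n → EuclideanSpace ℝ (Fin 2))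
    (H : (steinerGraph n).Subgraph) :
    subCost p q (H.deleteVerts (Set.range Sum.inr)) = subCost p q H := by
  unfold subCost
  congr 1
  refine Finset.sum_congr rfl fun u _ => Finset.sum_congr rfl fun v _ => ?_
  rcases u with x | i <;> rcases v with y | j
  · by_cases h : H.Adj (Sum.inl x) (Sum.inl y)
    · simp [h, H.edge_vert h, H.edge_vert h.symm]
    · simp [h]
  all_goals simp [wfun]

open scoped Classical in

theorem stmt_10 (n : ℕ) (p q : Fin n → EuclideanSpace ℝ (Fin 2))
    (H : (steinerGraph n).Subgraph) (hH : IsSteinerTree H)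
    -- `H` contains exactly one of the two endpoints of each segment
    (hone : ∀ i : Fin n,
      Xor' (Sum.inl (i, false) ∈ H.verts) (Sum.inl (i, true) ∈ H.verts)) :
    -- deleting the terminals and their incident edges leaves a spanning tree
    -- on the chosen endpoints, of the same cost
    (H.deleteVerts (Set.range Sum.inr)).Connected ∧
    (H.deleteVerts (Set.range Sum.inr)).coe.IsAcyclic ∧
    subCost p q (H.deleteVerts (Set.range Sum.inr)) = subCost p q H := by
  obtain ⟨hconn, -, hacyc⟩ := hH
  refine ⟨?_, ?_, subCost_deleteVerts_range_inr p q H⟩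
  · rw [Subgraph.connected_iff]
    refine ⟨hconn.preconnected.deleteVerts ?_,
      verts_deleteVerts_range_inr_nonempty hconn.nonempty hone⟩
    rintro _ ⟨i, rfl⟩
    exact neighborSet_inr_subsingleton hone i
  · exact hacyc.comap (Subgraph.inclusion H.deleteVerts_le) (Subgraph.inclusion.injective _)
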